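/- arXiv:1202.4337 — 7 statements merged into one kernel-verified Lean document; each statement's English description precedes it below -/
import Mathlib

section
/- The kernel of C − I equals the set of vectors (v, v, …, v) ∈ ℝ^{(m+1)n} whose m+1 blocks are all equal to a common vector v ∈ ker(A+B); consequently dim ker(C − I) = dim ker(A+B), i.e. the geometric multiplicity of the eigenvalue 1 of C equals the geometric multiplicity of the eigenvalue 0 of A+B. -/
open Matrix

/-- The Euler companion matrix `C` of the forward Euler discretization
`z_{k+1} = z_k + ε A z_k + ε B z_{k-m}`, with step size `ε = 1/m`, written in
`(m+1) × (m+1)` blocks of size `n × n`: the first block row is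
`(I + εA, 0, …, 0, εB)`, the subdiagonal blocks are `I`, all other blocks vanish. -/
noncomputable def eulerC (n m : ℕ) (A B : Matrix (Fin n) (Fin n) ℝ) :
    Matrix (Fin (m+1) × Fin n) (Fin (m+1) × Fin n) ℝ :=
  fun ip jq =>
    if ip.1 = 0 then
      (if jq.1 = 0 then (if ip.2 = jq.2 then 1 else 0) + (1 / (m : ℝ)) * A ip.2 jq.2
       else if (jq.1 : ℕ) = m then (1 / (m : ℝ)) * B ip.2 jq.2 else 0)
    else if (jq.1 : ℕ) + 1 = (ip.1 : ℕ) then (if ip.2 = jq.2 then 1 else 0) else 0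

lemma eulerC_row0 (n m : ℕ) (hm : 0 < m) (A B : Matrix (Fin n) (Fin n) ℝ)
    (u : Fin (m+1) × Fin n → ℝ) (p : Fin n) :
    (eulerC n m A B *ᵥ u) (0, p) =
      u (0, p) + (1/(m:ℝ)) * ((A *ᵥ fun q => u (0,q)) p)
        + (1/(m:ℝ)) * ((B *ᵥ fun q => u (Fin.last m, q)) p) := by
  have hlast0 : (Fin.last m : Fin (m+1)) ≠ 0 := by
    simp [Fin.ext_iff]; omega
  rw [mulVec, dotProduct, Fintype.sum_prod_type]
  rw [← Finset.sum_subset (Finset.subset_univ ({0, Fin.last m} : Finset (Fin (m+1))))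
      (fun j _ hj => ?_)]
  · rw [Finset.sum_insert (by simp [Ne.symm hlast0]), Finset.sum_singleton]
    simp only [eulerC, if_pos rfl, if_neg hlast0, Fin.val_last]
    simp [add_mul, Finset.sum_add_distrib, ite_mul, mulVec, dotProduct,
      Finset.mul_sum, mul_assoc, Finset.sum_ite_eq]
  · simp only [Finset.mem_insert, Finset.mem_singleton, not_or] at hj
    have h1 : (j : ℕ) ≠ m := fun h => hj.2 (by ext; simpa using h)
    simp only [eulerC, if_pos rfl, if_neg hj.1, if_neg h1]
    simp

lemma eulerC_rowi (n m : ℕ) (A B : Matrix (Fin n) (Fin n) ℝ)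
    (u : Fin (m+1) × Fin n → ℝ) (i : Fin (m+1)) (hi : i ≠ 0) (p : Fin n) :
    (eulerC n m A B *ᵥ u) (i, p) = u (⟨(i:ℕ) - 1, by omega⟩, p) := by
  have hiv : (i : ℕ) ≠ 0 := fun h => hi (by ext; simpa using h)
  rw [mulVec, dotProduct, Fintype.sum_prod_type]
  rw [Finset.sum_eq_single (⟨(i:ℕ)-1, by omega⟩ : Fin (m+1))]
  · simp only [eulerC, if_neg hi]
    have : ((⟨(i:ℕ)-1, by omega⟩ : Fin (m+1)) : ℕ) + 1 = (i:ℕ) := by simp; omega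
    simp [this, ite_mul, Finset.sum_ite_eq]
  · intro j _ hj
    have : (j : ℕ) + 1 ≠ (i : ℕ) := by
      intro h; apply hj; ext; simp; omega
    simp [eulerC, if_neg hi, this]
  · simp

lemma mem_ker_iff (n m : ℕ) (hm : 0 < m) (A B : Matrix (Fin n) (Fin n) ℝ)
    (u : Fin (m+1) × Fin n → ℝ) :
    (eulerC n m A B - 1) *ᵥ u = 0 ↔
      ∃ v : Fin n → ℝ, (A + B) *ᵥ v = 0 ∧ u = fun ip => v ip.2 := by
  have hsub : ∀ w : Fin (m+1) × Fin n → ℝ,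
      (eulerC n m A B - 1) *ᵥ w = eulerC n m A B *ᵥ w - w := by
    intro w; rw [sub_mulVec, one_mulVec]
  have hε : (1 / (m : ℝ)) ≠ 0 := by
    simp; positivity
  constructor
  · intro h
    rw [hsub, sub_eq_zero] at h
    have hrow : ∀ ip, (eulerC n m A B *ᵥ u) ip = u ip := fun ip => congrFun h ip
    have hstep : ∀ k (hk : k < m + 1) (p : Fin n), u (⟨k, hk⟩, p) = u (0, p) := by
      intro k
      induction k with
      | zero => intro hk p; rfl
      | succ k ih =>
        intro hk p
        have hk' : k < m + 1 := by omega
        have hi : (⟨k+1, hk⟩ : Fin (m+1)) ≠ 0 := by simp [Fin.ext_iff]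
        have := eulerC_rowi n m A B u ⟨k+1, hk⟩ hi p
        rw [hrow] at this
        simpa [this] using ih hk' p
    set v : Fin n → ℝ := fun q => u (0, q) with hv
    have hall : ∀ ip, u ip = v ip.2 := by
      rintro ⟨i, p⟩
      have := hstep i.val i.isLt p
      simpa using this
    refine ⟨v, ?_, funext hall⟩
    funext p
    have h0 := eulerC_row0 n m hm A B u p
    rw [hrow] at h0
    have hlasteq : (fun q => u (Fin.last m, q)) = v := by
      funext q; exact hall (Fin.last m, q)
    rw [hlasteq] at h0
    have : (1/(m:ℝ)) * ((A *ᵥ v) p + (B *ᵥ v) p) = 0 := by linarith [h0]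
    have h2 : (A *ᵥ v) p + (B *ᵥ v) p = 0 := by
      rcases mul_eq_zero.mp this with h | h
      · exact absurd h hε
      · exact h
    simpa [add_mulVec] using h2
  · rintro ⟨v, hv, rfl⟩
    rw [hsub, sub_eq_zero]
    funext ip
    obtain ⟨i, p⟩ := ip
    by_cases hi : i = 0
    · subst hi
      rw [eulerC_row0 n m hm A B _ p]
      have : (A *ᵥ v) p + (B *ᵥ v) p = 0 := by
        have := congrFun hv p
        simpa [add_mulVec] using this
      have h2 : (A *ᵥ fun q => v q) p + (B *ᵥ fun q => v q) p = 0 := this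
      have hre : v p + (1/(m:ℝ)) * (A *ᵥ fun q => v q) p
          + (1/(m:ℝ)) * (B *ᵥ fun q => v q) p
          = v p + (1/(m:ℝ)) * ((A *ᵥ fun q => v q) p + (B *ᵥ fun q => v q) p) := by ring
      simp only
      rw [hre, h2, mul_zero, add_zero]
    · rw [eulerC_rowi n m A B _ i hi p]

theorem stmt_2 (n m : ℕ) (hn : 0 < n) (hm : 0 < m) (A B : Matrix (Fin n) (Fin n) ℝ) :
    ((LinearMap.ker ((eulerC n m A B - 1).mulVecLin) :
        Submodule ℝ (Fin (m+1) × Fin n → ℝ)) : Set (Fin (m+1) × Fin n → ℝ)) =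
      {u | ∃ v : Fin n → ℝ, (A + B) *ᵥ v = 0 ∧ u = fun ip => v ip.2} ∧
    Module.finrank ℝ (LinearMap.ker ((eulerC n m A B - 1).mulVecLin)) =
      Module.finrank ℝ (LinearMap.ker ((A + B).mulVecLin)) := by
  have hker : ∀ u, u ∈ LinearMap.ker ((eulerC n m A B - 1).mulVecLin) ↔
      ∃ v : Fin n → ℝ, (A + B) *ᵥ v = 0 ∧ u = fun ip => v ip.2 := by
    intro u
    rw [LinearMap.mem_ker, mulVecLin_apply]
    exact mem_ker_iff n m hm A B u
  constructor
  · ext u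
    simpa using hker u
  · let L : (Fin n → ℝ) →ₗ[ℝ] (Fin (m+1) × Fin n → ℝ) :=
      LinearMap.funLeft ℝ ℝ Prod.snd
    have hmap : ∀ v ∈ LinearMap.ker ((A+B).mulVecLin),
        L v ∈ LinearMap.ker ((eulerC n m A B - 1).mulVecLin) := by
      intro v hv
      rw [hker]
      exact ⟨v, by simpa [add_mulVec] using hv, rfl⟩
    let f := L.restrict hmap
    have hbij : Function.Bijective f := by
      constructor
      · intro x y hxy
        ext q
        have h2 : (f x : Fin (m+1) × Fin n → ℝ) (0, q)
            = (f y : Fin (m+1) × Fin n → ℝ) (0, q) := by rw [hxy]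
        simpa [f, L, LinearMap.restrict_apply, LinearMap.funLeft] using h2
      · rintro ⟨u, hu⟩
        obtain ⟨v, hv, rfl⟩ := (hker u).mp hu
        exact ⟨⟨v, by simpa [add_mulVec] using hv⟩, Subtype.ext rfl⟩
    exact (LinearEquiv.ofBijective f hbij).finrank_eq.symm
end

section
/- Let φ₁⁰, φ₂⁰ ∈ ℝⁿ satisfy (A+B)φ₁⁰ = 0 and (A+B)φ₂⁰ = (B+I)φ₁⁰. Define φ₁ ∈ ℝ^{(m+1)n} as the vector whose m+1 blocks all equal εφ₁⁰, and φ₂ ∈ ℝ^{(m+1)n} as the vector whose j-th block (j = 0, 1, …, m, counted from the top) equals ε(mφ₂⁰ − jφ₁⁰). Then (C − I)φ₁ = 0 and (C − I)φ₂ = φ₁, i.e. Cφ₁ = φ₁ and Cφ₂ = φ₂ + φ₁, so (φ₁, φ₂) is a Jordan chain of C for the eigenvalue 1. -/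
open Matrix

/-! The block rows `1, …, m` of `eulerC` shift a vector down by one block, so they fix any vector
with constant blocks and add `εφ₁⁰` to one whose blocks decrease by `εφ₁⁰`. The first block row
reads `v₀ + ε (A v₀ + B v_m)`, and there the two hypotheses on `A + B` are exactly what is needed. -/

variable {n m : ℕ} {A B : Matrix (Fin n) (Fin n) ℝ}

theorem eulerC_mulVec_apply_succ (v : Fin (m + 1) × Fin n → ℝ) (i : Fin m) (p : Fin n) :
    (eulerC n m A B *ᵥ v) (i.succ, p) = v (i.castSucc, p) := by
  simp only [mulVec, dotProduct, Fintype.sum_prod_type, eulerC, Fin.succ_ne_zero, if_false]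
  rw [Finset.sum_eq_single i.castSucc]
  · simp
  · intro j _ hj
    have : (j : ℕ) ≠ i := fun h => hj (Fin.ext h)
    simp [this]
  · simp

theorem eulerC_mulVec_apply_zero (hm : 0 < m) (v : Fin (m + 1) × Fin n → ℝ) (p : Fin n) :
    (eulerC n m A B *ᵥ v) (0, p) =
      v (0, p) + 1 / (m : ℝ) * (A *ᵥ v.curry 0 + B *ᵥ v.curry (Fin.last m)) p := by
  obtain ⟨k, rfl⟩ : ∃ k, m = k + 1 := ⟨m - 1, by omega⟩
  simp only [mulVec, dotProduct, Fintype.sum_prod_type]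
  rw [Fin.sum_univ_succ, Fin.sum_univ_castSucc]
  have hlt : ∀ i : Fin k, (i : ℕ) ≠ k := fun i => i.isLt.ne
  simp [eulerC, hlt, mulVec, dotProduct, add_mul, mul_add, Finset.mul_sum, Finset.sum_add_distrib,
    mul_assoc, add_assoc]

theorem stmt_3_general (n m : ℕ) (hm : 0 < m) (A B : Matrix (Fin n) (Fin n) ℝ)
    (φ₁0 φ₂0 : Fin n → ℝ)
    (h1 : (A + B) *ᵥ φ₁0 = 0)
    (h2 : (A + B) *ᵥ φ₂0 = (B + 1) *ᵥ φ₁0)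
    (φ₁ φ₂ : Fin (m+1) × Fin n → ℝ)
    (hφ₁ : φ₁ = fun ip => (1 / (m : ℝ)) * φ₁0 ip.2)
    (hφ₂ : φ₂ = fun ip => (1 / (m : ℝ)) * ((m : ℝ) * φ₂0 ip.2 - (ip.1 : ℕ) * φ₁0 ip.2)) :
    eulerC n m A B *ᵥ φ₁ = φ₁ ∧ eulerC n m A B *ᵥ φ₂ = φ₂ + φ₁ := by
  have hm' : (m : ℝ) ≠ 0 := by positivity
  have hφ₁_block : ∀ j, φ₁.curry j = (1 / (m : ℝ)) • φ₁0 := fun j => by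
    ext q; simp [hφ₁]
  have hφ₂_first : φ₂.curry 0 = φ₂0 := by
    ext q; simp [hφ₂, hm']
  have hφ₂_last : φ₂.curry (Fin.last m) = φ₂0 - φ₁0 := by
    ext q
    simp only [hφ₂, one_div, Function.curry_apply, Fin.val_last, Pi.sub_apply]
    field_simp
  rw [add_mulVec] at h1
  rw [add_mulVec, add_mulVec, one_mulVec] at h2
  constructor <;> ext ⟨i, p⟩ <;> cases i using Fin.cases
  · rw [eulerC_mulVec_apply_zero hm, hφ₁_block, hφ₁_block, mulVec_smul, mulVec_smul, ← smul_add, h1]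
    simp
  · rw [eulerC_mulVec_apply_succ, hφ₁]
  · rw [eulerC_mulVec_apply_zero hm, hφ₂_first, hφ₂_last, mulVec_sub, ← add_sub_assoc, h2,
      add_sub_cancel_left, Pi.add_apply, hφ₁]
  · rw [eulerC_mulVec_apply_succ, Pi.add_apply, hφ₂, hφ₁]
    simp only [Fin.val_castSucc, Fin.val_succ]
    push_cast
    ring

theorem stmt_3 (n m : ℕ) (hn : 0 < n) (hm : 0 < m) (A B : Matrix (Fin n) (Fin n) ℝ)
    (φ₁0 φ₂0 : Fin n → ℝ)
    (h1 : (A + B) *ᵥ φ₁0 = 0)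
    (h2 : (A + B) *ᵥ φ₂0 = (B + 1) *ᵥ φ₁0)
    (φ₁ φ₂ : Fin (m+1) × Fin n → ℝ)
    (hφ₁ : φ₁ = fun ip => (1 / (m : ℝ)) * φ₁0 ip.2)
    (hφ₂ : φ₂ = fun ip => (1 / (m : ℝ)) * ((m : ℝ) * φ₂0 ip.2 - (ip.1 : ℕ) * φ₁0 ip.2)) :
    eulerC n m A B *ᵥ φ₁ = φ₁ ∧ eulerC n m A B *ᵥ φ₂ = φ₂ + φ₁ :=
  stmt_3_general n m hm A B φ₁0 φ₂0 h1 h2 φ₁ φ₂ hφ₁ hφ₂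
end

section
/- Let ψ₁⁰, ψ₂⁰ ∈ (ℝⁿ)* be row vectors satisfying ψ₂⁰(A+B) = 0 and ψ₁⁰(A+B) = ψ₂⁰(B+I). Define row vectors ψ̂₂, ψ̂₁ ∈ (ℝ^{(m+1)n})* blockwise by: ψ̂₂ has block 0 equal to ψ₂⁰ and blocks 1,…,m all equal to εψ₂⁰B; ψ̂₁ has block 0 equal to mψ₁⁰ and block j equal to ψ₁⁰B − (m+1−j)εψ₂⁰B for j = 1,…,m. Then ψ̂₂(C − I) = 0 and ψ̂₁(C − I) = ψ̂₂, i.e. ψ̂₂C = ψ̂₂ and ψ̂₁C = ψ̂₁ + ψ̂₂, so (ψ̂₂, ψ̂₁) is a left Jordan chain of C for the eigenvalue 1. -/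
/-!
Left multiplication by the Euler companion matrix acts blockwise:
`(ψ C)₀ = ψ₀ (I + εA) + ψ₁`, `(ψ C)ⱼ = ψⱼ₊₁` for `0 < j < m`, and `(ψ C)ₘ = ε ψ₀ B`.
On the blocks `1, …, m` the vector `ψ̂₂` is constant and `ψ̂₁` is affine in `j` with slope
`ε ψ₂⁰ B`, so the shift reproduces `ψ̂₂` and `ψ̂₁ + ψ̂₂` there; at the two boundary blocks the
identities reduce to the hypotheses on `ψ₁⁰` and `ψ₂⁰`.
-/

open Matrix

variable {n m : ℕ} (A B : Matrix (Fin n) (Fin n) ℝ) (ψ : Fin (m + 1) × Fin n → ℝ)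

lemma vecMul_eulerC_apply_zero (hm : 0 < m) (q : Fin n) :
    (ψ ᵥ* eulerC n m A B) (0, q) =
      ψ (0, q) + (1 / (m : ℝ)) * ((fun p => ψ (0, p)) ᵥ* A) q + ψ (⟨1, by omega⟩, q) := by
  rw [vecMul, dotProduct, Fintype.sum_prod_type, Fin.sum_univ_succ, vecMul, dotProduct,
    Finset.mul_sum, Finset.sum_eq_single (⟨0, hm⟩ : Fin m)]
  · simp [eulerC, mul_add, Finset.sum_add_distrib, mul_left_comm]
  · intro i _ hi
    have hi0 : (i : ℕ) ≠ 0 := fun h => hi (Fin.ext h)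
    simp [eulerC, Fin.succ_ne_zero, hi0]
  · simp

lemma vecMul_eulerC_apply_of_ne_zero_of_lt {j : Fin (m + 1)} (hj0 : j ≠ 0) (hjm : (j : ℕ) < m)
    (q : Fin n) :
    (ψ ᵥ* eulerC n m A B) (j, q) = ψ (⟨j + 1, by omega⟩, q) := by
  rw [vecMul, dotProduct, Finset.sum_eq_single (⟨⟨j + 1, by omega⟩, q⟩ : Fin (m + 1) × Fin n)]
  · have hne : (⟨j + 1, by omega⟩ : Fin (m + 1)) ≠ 0 := Fin.ne_of_val_ne (by simp)
    simp [eulerC, hne]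
  · rintro ⟨i, p⟩ - hip
    simp only [eulerC, hj0, hjm.ne, if_false]
    split_ifs <;> simp_all
  · simp

lemma vecMul_eulerC_apply_last (hm : 0 < m) (q : Fin n) :
    (ψ ᵥ* eulerC n m A B) (Fin.last m, q) = (1 / (m : ℝ)) * ((fun p => ψ (0, p)) ᵥ* B) q := by
  have hlast : Fin.last m ≠ 0 := Fin.ne_of_val_ne (by rw [Fin.val_last, Fin.val_zero]; exact hm.ne')
  rw [vecMul, dotProduct, Fintype.sum_prod_type, Fin.sum_univ_succ, vecMul, dotProduct,
    Finset.mul_sum]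
  simp [eulerC, hlast, Fin.succ_ne_zero, mul_left_comm, Nat.ne_of_gt]

noncomputable def eulerLeftEigenvector (m : ℕ) (B : Matrix (Fin n) (Fin n) ℝ)
    (ψ₂0 : Fin n → ℝ) : Fin (m + 1) × Fin n → ℝ :=
  fun ip => if ip.1 = 0 then ψ₂0 ip.2 else (1 / (m : ℝ)) * (ψ₂0 ᵥ* B) ip.2

noncomputable def eulerLeftGenEigenvector (m : ℕ) (B : Matrix (Fin n) (Fin n) ℝ)
    (ψ₁0 ψ₂0 : Fin n → ℝ) : Fin (m + 1) × Fin n → ℝ :=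
  fun ip => if ip.1 = 0 then (m : ℝ) * ψ₁0 ip.2
    else (ψ₁0 ᵥ* B) ip.2 - ((m : ℝ) + 1 - (ip.1 : ℕ)) * (1 / (m : ℝ)) * (ψ₂0 ᵥ* B) ip.2

variable (ψ₁0 ψ₂0 : Fin n → ℝ)

lemma eulerLeftEigenvector_zero_block :
    (fun p => eulerLeftEigenvector m B ψ₂0 (0, p)) = ψ₂0 := rfl

lemma eulerLeftGenEigenvector_zero_block :
    (fun p => eulerLeftGenEigenvector m B ψ₁0 ψ₂0 (0, p)) = (m : ℝ) • ψ₁0 := rfl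

lemma eulerLeftEigenvector_of_ne_zero {j : Fin (m + 1)} (hj : j ≠ 0) (q : Fin n) :
    eulerLeftEigenvector m B ψ₂0 (j, q) = (1 / (m : ℝ)) * (ψ₂0 ᵥ* B) q :=
  if_neg hj

lemma eulerLeftGenEigenvector_of_ne_zero {j : Fin (m + 1)} (hj : j ≠ 0) (q : Fin n) :
    eulerLeftGenEigenvector m B ψ₁0 ψ₂0 (j, q) =
      (ψ₁0 ᵥ* B) q - ((m : ℝ) + 1 - (j : ℕ)) * (1 / (m : ℝ)) * (ψ₂0 ᵥ* B) q :=
  if_neg hj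

lemma eulerLeftEigenvector_vecMul_eulerC (hm : 0 < m) (h : ψ₂0 ᵥ* (A + B) = 0) :
    eulerLeftEigenvector m B ψ₂0 ᵥ* eulerC n m A B = eulerLeftEigenvector m B ψ₂0 := by
  have hq (q : Fin n) : (ψ₂0 ᵥ* A) q + (ψ₂0 ᵥ* B) q = 0 := by
    simpa only [vecMul_add, Pi.add_apply, Pi.zero_apply] using congrFun h q
  funext ⟨j, q⟩
  rcases eq_or_ne j 0 with rfl | hj0
  · have h1 : (⟨1, by omega⟩ : Fin (m + 1)) ≠ 0 := Fin.ne_of_val_ne one_ne_zero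
    rw [vecMul_eulerC_apply_zero _ _ _ hm, eulerLeftEigenvector_zero_block,
      eulerLeftEigenvector_of_ne_zero _ _ h1]
    linear_combination (1 / (m : ℝ)) * hq q
  rcases (Nat.lt_succ_iff.mp j.isLt).lt_or_eq with hjm | hjm
  · have hj1 : (⟨j + 1, by omega⟩ : Fin (m + 1)) ≠ 0 := Fin.ne_of_val_ne j.val.succ_ne_zero
    rw [vecMul_eulerC_apply_of_ne_zero_of_lt _ _ _ hj0 hjm,
      eulerLeftEigenvector_of_ne_zero _ _ hj0, eulerLeftEigenvector_of_ne_zero _ _ hj1]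
  · obtain rfl : j = Fin.last m := Fin.ext hjm
    rw [vecMul_eulerC_apply_last _ _ _ hm, eulerLeftEigenvector_zero_block,
      eulerLeftEigenvector_of_ne_zero _ _ hj0]

lemma eulerLeftGenEigenvector_vecMul_eulerC (hm : 0 < m)
    (h : ψ₁0 ᵥ* (A + B) = ψ₂0 ᵥ* (B + 1)) :
    eulerLeftGenEigenvector m B ψ₁0 ψ₂0 ᵥ* eulerC n m A B =
      eulerLeftGenEigenvector m B ψ₁0 ψ₂0 + eulerLeftEigenvector m B ψ₂0 := by
  have hq (q : Fin n) : (ψ₁0 ᵥ* A) q + (ψ₁0 ᵥ* B) q = (ψ₂0 ᵥ* B) q + ψ₂0 q := by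
    simpa only [vecMul_add, vecMul_one, Pi.add_apply] using congrFun h q
  funext ⟨j, q⟩
  rw [Pi.add_apply]
  rcases eq_or_ne j 0 with rfl | hj0
  · have h1 : (⟨1, by omega⟩ : Fin (m + 1)) ≠ 0 := Fin.ne_of_val_ne one_ne_zero
    rw [vecMul_eulerC_apply_zero _ _ _ hm, eulerLeftGenEigenvector_zero_block, smul_vecMul,
      eulerLeftGenEigenvector_of_ne_zero _ _ _ h1]
    simp only [eulerLeftGenEigenvector, eulerLeftEigenvector, if_pos, Pi.smul_apply, smul_eq_mul]
    field_simp
    linear_combination (m : ℝ) * hq q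
  rcases (Nat.lt_succ_iff.mp j.isLt).lt_or_eq with hjm | hjm
  · have hj1 : (⟨j + 1, by omega⟩ : Fin (m + 1)) ≠ 0 := Fin.ne_of_val_ne j.val.succ_ne_zero
    rw [vecMul_eulerC_apply_of_ne_zero_of_lt _ _ _ hj0 hjm,
      eulerLeftGenEigenvector_of_ne_zero _ _ _ hj1, eulerLeftGenEigenvector_of_ne_zero _ _ _ hj0,
      eulerLeftEigenvector_of_ne_zero _ _ hj0]
    push_cast
    ring
  · obtain rfl : j = Fin.last m := Fin.ext hjm
    rw [vecMul_eulerC_apply_last _ _ _ hm, eulerLeftGenEigenvector_zero_block, smul_vecMul,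
      eulerLeftGenEigenvector_of_ne_zero _ _ _ hj0, eulerLeftEigenvector_of_ne_zero _ _ hj0,
      Fin.val_last, Pi.smul_apply, smul_eq_mul]
    field_simp
    ring

theorem stmt_4_general (n m : ℕ) (hm : 0 < m) (A B : Matrix (Fin n) (Fin n) ℝ)
    (ψ₁0 ψ₂0 : Fin n → ℝ)
    (h3 : ψ₂0 ᵥ* (A + B) = 0)
    (h4 : ψ₁0 ᵥ* (A + B) = ψ₂0 ᵥ* (B + 1))
    (ψ₁ ψ₂ : Fin (m+1) × Fin n → ℝ)
    (hψ₂ : ψ₂ = fun ip =>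
      if ip.1 = 0 then ψ₂0 ip.2 else (1 / (m : ℝ)) * (ψ₂0 ᵥ* B) ip.2)
    (hψ₁ : ψ₁ = fun ip =>
      if ip.1 = 0 then (m : ℝ) * ψ₁0 ip.2
      else (ψ₁0 ᵥ* B) ip.2 - ((m : ℝ) + 1 - (ip.1 : ℕ)) * (1 / (m : ℝ)) * (ψ₂0 ᵥ* B) ip.2) :
    ψ₂ ᵥ* eulerC n m A B = ψ₂ ∧ ψ₁ ᵥ* eulerC n m A B = ψ₁ + ψ₂ := by
  subst hψ₂ hψ₁
  exact ⟨eulerLeftEigenvector_vecMul_eulerC A B ψ₂0 hm h3,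
    eulerLeftGenEigenvector_vecMul_eulerC A B ψ₁0 ψ₂0 hm h4⟩

theorem stmt_4 (n m : ℕ) (hn : 0 < n) (hm : 0 < m) (A B : Matrix (Fin n) (Fin n) ℝ)
    (ψ₁0 ψ₂0 : Fin n → ℝ)
    (h3 : ψ₂0 ᵥ* (A + B) = 0)
    (h4 : ψ₁0 ᵥ* (A + B) = ψ₂0 ᵥ* (B + 1))
    (ψ₁ ψ₂ : Fin (m+1) × Fin n → ℝ)
    (hψ₂ : ψ₂ = fun ip =>
      if ip.1 = 0 then ψ₂0 ip.2 else (1 / (m : ℝ)) * (ψ₂0 ᵥ* B) ip.2)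
    (hψ₁ : ψ₁ = fun ip =>
      if ip.1 = 0 then (m : ℝ) * ψ₁0 ip.2
      else (ψ₁0 ᵥ* B) ip.2 - ((m : ℝ) + 1 - (ip.1 : ℕ)) * (1 / (m : ℝ)) * (ψ₂0 ᵥ* B) ip.2) :
    ψ₂ ᵥ* eulerC n m A B = ψ₂ ∧ ψ₁ ᵥ* eulerC n m A B = ψ₁ + ψ₂ :=
  stmt_4_general n m hm A B ψ₁0 ψ₂0 h3 h4 ψ₁ ψ₂ hψ₂ hψ₁
end

section
/- Let φ₁⁰, φ₂⁰ ∈ ℝⁿ and row vectors ψ₁⁰, ψ₂⁰ ∈ (ℝⁿ)* satisfy equations (28): (A+B)φ₁⁰ = 0, (A+B)φ₂⁰ = (B+I)φ₁⁰, ψ₂⁰(A+B) = 0, ψ₁⁰(A+B) = ψ₂⁰(B+I), ψ₂⁰φ₂⁰ − (1/2)ψ₂⁰Bφ₁⁰ + ψ₂⁰Bφ₂⁰ = 1. Define φ₁, φ₂ ∈ ℝ^{(m+1)n} and row vectors ψ̂₁, ψ̂₂ blockwise by: all blocks of φ₁ equal εφ₁⁰; the j-th block of φ₂ (j = 0,…,m)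 equals ε(mφ₂⁰ − jφ₁⁰); block 0 of ψ̂₂ is ψ₂⁰ and its blocks 1,…,m are εψ₂⁰B; block 0 of ψ̂₁ is mψ₁⁰ and its block j is ψ₁⁰B − (m+1−j)εψ₂⁰B for j = 1,…,m. Then ψ̂₂·φ₁ = 0, and ψ̂₂·φ₂ = ψ̂₁·φ₁ = 1 − (1/(2m))ψ₂⁰Bφ₁⁰; in particular, if ψ₂⁰Bφ₁⁰ ≠ 2m, the rescaled vectors ψ₁ = c·ψ̂₁ and ψ₂ = c·ψ̂₂ with c = (1 − (1/(2m))ψ₂⁰Bφ₁⁰)^{−1} satisfy ψ₁·φ₁ = ψ₂·φ₂ = 1 and ψ₂·φ₁ = 0. -/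
open Matrix Finset

private lemma inner0 {n : ℕ} (u v : Fin n → ℝ) (d : ℝ) :
    ∑ p : Fin n, u p * (d * v p) = d * (u ⬝ᵥ v) := by
  rw [dotProduct, Finset.mul_sum]; exact Finset.sum_congr rfl fun p _ => by ring

private lemma inner1 {n : ℕ} (u v : Fin n → ℝ) (c d : ℝ) :
    ∑ p : Fin n, (c * u p) * (d * v p) = c * d * (u ⬝ᵥ v) := by
  rw [dotProduct, Finset.mul_sum]; exact Finset.sum_congr rfl fun p _ => by ring

private lemma inner0' {n : ℕ} (u v w : Fin n → ℝ) (d e f : ℝ) :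
    ∑ p : Fin n, u p * (d * (e * v p - f * w p)) = d*e*(u ⬝ᵥ v) - d*f*(u ⬝ᵥ w) := by
  rw [dotProduct, dotProduct, Finset.mul_sum, Finset.mul_sum, ← Finset.sum_sub_distrib]
  exact Finset.sum_congr rfl fun p _ => by ring

private lemma inner1' {n : ℕ} (u v w : Fin n → ℝ) (c d e f : ℝ) :
    ∑ p : Fin n, (c * u p) * (d * (e * v p - f * w p)) = c*d*e*(u ⬝ᵥ v) - c*d*f*(u ⬝ᵥ w) := by
  rw [dotProduct, dotProduct, Finset.mul_sum, Finset.mul_sum, ← Finset.sum_sub_distrib]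
  exact Finset.sum_congr rfl fun p _ => by ring

private lemma inner2 {n : ℕ} (u v w : Fin n → ℝ) (g d : ℝ) :
    ∑ p : Fin n, (u p - g * w p) * (d * v p) = d * (u ⬝ᵥ v) - g * d * (w ⬝ᵥ v) := by
  rw [dotProduct, dotProduct, Finset.mul_sum, Finset.mul_sum, ← Finset.sum_sub_distrib]
  exact Finset.sum_congr rfl fun p _ => by ring

private lemma gauss (m : ℕ) : ∑ j : Fin m, ((j:ℕ):ℝ) = (m:ℝ)*((m:ℝ)-1)/2 := by
  rw [Fin.sum_univ_eq_sum_range]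
  induction m with
  | zero => simp
  | succ k ih => rw [Finset.sum_range_succ, ih]; push_cast; ring

private lemma outer2 {n m : ℕ} (u v w : Fin n → ℝ) (c d e : ℝ) :
    ∑ j : Fin m, ∑ p : Fin n, (c * u p) * (d * (e * v p - ((((j.succ : Fin (m+1)) : ℕ)):ℝ) * w p))
      = (m:ℝ) * (c*d*e*(u ⬝ᵥ v)) - ((m:ℝ)*((m:ℝ)+1)/2) * (c*d*(u ⬝ᵥ w)) := by
  simp only [inner1']
  rw [Finset.sum_sub_distrib, Finset.sum_const, card_univ, Fintype.card_fin, nsmul_eq_mul]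
  congr 1
  calc ∑ j : Fin m, c*d*((((j.succ : Fin (m+1)) : ℕ)):ℝ)*(u ⬝ᵥ w)
      = ∑ j : Fin m, (((j:ℕ):ℝ)+1) * (c*d*(u ⬝ᵥ w)) :=
        Finset.sum_congr rfl fun j _ => by rw [Fin.val_succ]; push_cast; ring
    _ = (∑ j : Fin m, (((j:ℕ):ℝ)+1)) * (c*d*(u ⬝ᵥ w)) := by rw [Finset.sum_mul]
    _ = _ := by
        rw [Finset.sum_add_distrib, gauss, Finset.sum_const, card_univ, Fintype.card_fin,
          nsmul_eq_mul, mul_one]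
        ring

private lemma outer3 {n m : ℕ} (u v w : Fin n → ℝ) (d : ℝ) :
    ∑ j : Fin m, ∑ p : Fin n,
        (u p - ((m:ℝ) + 1 - ((((j.succ : Fin (m+1)) : ℕ)):ℝ)) * (1/(m:ℝ)) * w p) * (d * v p)
      = (m:ℝ) * (d * (u ⬝ᵥ v)) - ((m:ℝ)*((m:ℝ)+1)/2) * ((1/(m:ℝ)) * d * (w ⬝ᵥ v)) := by
  simp only [inner2]
  rw [Finset.sum_sub_distrib, Finset.sum_const, card_univ, Fintype.card_fin, nsmul_eq_mul]
  congr 1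
  calc ∑ j : Fin m, ((m:ℝ) + 1 - ((((j.succ : Fin (m+1)) : ℕ)):ℝ)) * (1/(m:ℝ)) * d * (w ⬝ᵥ v)
      = ∑ j : Fin m, ((m:ℝ) - ((j:ℕ):ℝ)) * ((1/(m:ℝ)) * d * (w ⬝ᵥ v)) :=
        Finset.sum_congr rfl fun j _ => by rw [Fin.val_succ]; push_cast; ring
    _ = (∑ j : Fin m, ((m:ℝ) - ((j:ℕ):ℝ))) * ((1/(m:ℝ)) * d * (w ⬝ᵥ v)) := by
        rw [Finset.sum_mul]
    _ = _ := by
        rw [Finset.sum_sub_distrib, gauss, Finset.sum_const, card_univ, Fintype.card_fin,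
          nsmul_eq_mul]
        ring

theorem stmt_5 (n m : ℕ) (hn : 0 < n) (hm : 0 < m) (A B : Matrix (Fin n) (Fin n) ℝ)
    (φ₁0 φ₂0 ψ₁0 ψ₂0 : Fin n → ℝ)
    (h1 : (A + B) *ᵥ φ₁0 = 0)
    (h2 : (A + B) *ᵥ φ₂0 = (B + 1) *ᵥ φ₁0)
    (h3 : ψ₂0 ᵥ* (A + B) = 0)
    (h4 : ψ₁0 ᵥ* (A + B) = ψ₂0 ᵥ* (B + 1))
    (h5 : ψ₂0 ⬝ᵥ φ₂0 - (1/2) * (ψ₂0 ⬝ᵥ (B *ᵥ φ₁0)) + ψ₂0 ⬝ᵥ (B *ᵥ φ₂0) = 1)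
    (φ₁ φ₂ ψ₁ ψ₂ : Fin (m+1) × Fin n → ℝ)
    (hφ₁ : φ₁ = fun ip => (1 / (m : ℝ)) * φ₁0 ip.2)
    (hφ₂ : φ₂ = fun ip => (1 / (m : ℝ)) * ((m : ℝ) * φ₂0 ip.2 - (ip.1 : ℕ) * φ₁0 ip.2))
    (hψ₂ : ψ₂ = fun ip =>
      if ip.1 = 0 then ψ₂0 ip.2 else (1 / (m : ℝ)) * (ψ₂0 ᵥ* B) ip.2)
    (hψ₁ : ψ₁ = fun ip =>
      if ip.1 = 0 then (m : ℝ) * ψ₁0 ip.2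
      else (ψ₁0 ᵥ* B) ip.2 - ((m : ℝ) + 1 - (ip.1 : ℕ)) * (1 / (m : ℝ)) * (ψ₂0 ᵥ* B) ip.2) :
    ψ₂ ⬝ᵥ φ₁ = 0 ∧
    ψ₂ ⬝ᵥ φ₂ = 1 - (1 / (2 * (m : ℝ))) * (ψ₂0 ⬝ᵥ (B *ᵥ φ₁0)) ∧
    ψ₁ ⬝ᵥ φ₁ = 1 - (1 / (2 * (m : ℝ))) * (ψ₂0 ⬝ᵥ (B *ᵥ φ₁0)) ∧
    (ψ₂0 ⬝ᵥ (B *ᵥ φ₁0) ≠ 2 * (m : ℝ) →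
      ∀ c : ℝ, c = (1 - (1 / (2 * (m : ℝ))) * (ψ₂0 ⬝ᵥ (B *ᵥ φ₁0)))⁻¹ →
        (c • ψ₁) ⬝ᵥ φ₁ = 1 ∧ (c • ψ₂) ⬝ᵥ φ₂ = 1 ∧ (c • ψ₂) ⬝ᵥ φ₁ = 0) := by
  have hm0 : (m:ℝ) ≠ 0 := Nat.cast_ne_zero.2 hm.ne'
  -- scalar identities
  rw [dotProduct_mulVec, dotProduct_mulVec] at h5
  have e3 : (ψ₂0 ᵥ* (A + B)) ⬝ᵥ φ₂0 = 0 := by rw [h3, zero_dotProduct]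
  rw [← dotProduct_mulVec, h2, add_mulVec, one_mulVec, dotProduct_add,
    dotProduct_mulVec] at e3
  have e4 : (ψ₁0 ᵥ* (A + B)) ⬝ᵥ φ₂0 = (ψ₂0 ᵥ* (B + 1)) ⬝ᵥ φ₂0 := by rw [h4]
  rw [← dotProduct_mulVec, h2, add_mulVec, one_mulVec, dotProduct_add,
    dotProduct_mulVec, vecMul_add, vecMul_one, add_dotProduct] at e4
  have F1 : ψ₂0 ⬝ᵥ φ₁0 = -((ψ₂0 ᵥ* B) ⬝ᵥ φ₁0) := by linarith
  have F2 : (ψ₁0 ᵥ* B) ⬝ᵥ φ₁0 = 1 + (1/2) * ((ψ₂0 ᵥ* B) ⬝ᵥ φ₁0) - ψ₁0 ⬝ᵥ φ₁0 := by linarith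
  have F3 : (ψ₂0 ᵥ* B) ⬝ᵥ φ₂0 = 1 + (1/2) * ((ψ₂0 ᵥ* B) ⬝ᵥ φ₁0) - ψ₂0 ⬝ᵥ φ₂0 := by linarith
  -- block computations
  have H1 : ψ₂ ⬝ᵥ φ₁ = 0 := by
    rw [hψ₂, hφ₁, dotProduct, Fintype.sum_prod_type, Fin.sum_univ_succ]
    simp only [Fin.succ_ne_zero, if_false, if_true, ite_true, ite_false, reduceIte]
    rw [inner0, inner1, Finset.sum_const, card_univ, Fintype.card_fin, nsmul_eq_mul, F1]
    field_simp
    ring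
  have H2 : ψ₂ ⬝ᵥ φ₂ = 1 - (1 / (2 * (m : ℝ))) * ((ψ₂0 ᵥ* B) ⬝ᵥ φ₁0) := by
    rw [hψ₂, hφ₂, dotProduct, Fintype.sum_prod_type, Fin.sum_univ_succ]
    simp only [Fin.succ_ne_zero, if_false, if_true, ite_true, ite_false, reduceIte]
    rw [inner0', outer2, F3, F1]
    simp only [Fin.val_zero, Nat.cast_zero]
    field_simp
    ring
  have H3 : ψ₁ ⬝ᵥ φ₁ = 1 - (1 / (2 * (m : ℝ))) * ((ψ₂0 ᵥ* B) ⬝ᵥ φ₁0) := by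
    rw [hψ₁, hφ₁, dotProduct, Fintype.sum_prod_type, Fin.sum_univ_succ]
    simp only [Fin.succ_ne_zero, if_false, if_true, ite_true, ite_false, reduceIte]
    rw [inner1, outer3, F2]
    field_simp
    ring
  rw [dotProduct_mulVec]
  refine ⟨H1, H2, H3, fun hne c hc => ?_⟩
  have hT : 1 - (1 / (2 * (m : ℝ))) * ((ψ₂0 ᵥ* B) ⬝ᵥ φ₁0) ≠ 0 := by
    intro h
    apply hne
    field_simp at h
    linarith
  refine ⟨?_, ?_, ?_⟩
  · rw [smul_dotProduct, H3, smul_eq_mul, hc, inv_mul_cancel₀ hT]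
  · rw [smul_dotProduct, H2, smul_eq_mul, hc, inv_mul_cancel₀ hT]
  · rw [smul_dotProduct, H1, smul_eq_mul, mul_zero]
end

section
/- For every λ ∈ ℂ, det(λ·I_{(m+1)n} − C) = det((λ^{m+1} − λ^m)·I_n − ελ^m A − εB), where on the left the determinant is of an (m+1)n × (m+1)n complex matrix and on the right of an n×n complex matrix. Consequently, for λ ≠ 0, λ is an eigenvalue of C if and only if the n×n matrix (λ−1)λ^m I_n − ελ^m A − εB is singular. -/
/-!
Write `P(λ) = λ^{m+1} I - ∑_{k ≤ m} λ^{m-k} C_k` for the block companion matrix `C` with first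
block row `(C_0, …, C_m)`. Then `λ I - C = L Z U`, where `L` and `U` are block unitriangular and
`Z` is the block-cyclic matrix with `P(λ)` in its top right corner and `-I` on the subdiagonal.
The partial Horner sums `P_j(λ)` of `P(λ)` fill the first row of `L`; the identity
`P_j = λ P_{j-1} - C_j` is what makes the product come out right. Finally `det Z = det P(λ)`,
since the sign `(-1)^{mn}` of the block rotation cancels against `det (-I)^m`.
-/

open Matrix

open Finset

namespace Matrix

variable {R : Type*} [CommRing R] {n : Type*} [Fintype n] [DecidableEq n]

theorem det_comp_of_blockTriangular {ι : Type*} [Fintype ι] [DecidableEq ι] [LinearOrder ι]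
    {M : Matrix ι ι (Matrix n n R)} (h : M.BlockTriangular id) :
    (comp ι ι n n R M).det = ∏ i, (M i i).det := by
  rw [h.comp.det_fintype]
  refine prod_congr rfl fun k _ => ?_
  let e : {a : ι × n // a.1 = k} ≃ n :=
    { toFun := fun a => a.1.2
      invFun := fun q => ⟨(k, q), rfl⟩
      left_inv := fun ⟨⟨i, q⟩, hi⟩ => by subst hi; rfl
      right_inv := fun _ => rfl }
  rw [← det_submatrix_equiv_self e (M k k)]
  congr 1
  ext ⟨⟨i, p⟩, hi⟩ ⟨⟨j, q⟩, hj⟩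
  simp only [id] at hi hj
  simp only [toSquareBlock_def, submatrix_apply, comp_apply, hi, hj, e]
  rfl

end Matrix

theorem Fin.sum_ite_succ_eq {M : Type*} [AddCommMonoid M] {m : ℕ} (f : ℕ → M)
    (j : Fin (m + 1)) :
    ∑ k : Fin m, (if k.succ = j then f k else 0) = if (j : ℕ) = 0 then 0 else f (j - 1) := by
  induction j using Fin.cases with
  | zero => simp [Fin.succ_ne_zero]
  | succ j => simp [Fin.succ_inj]

theorem Fin.sum_ite_val_eq {M : Type*} [AddCommMonoid M] {m : ℕ} (f : ℕ → M)
    (j : Fin (m + 1)) :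
    ∑ k : Fin m, (if (j : ℕ) = k then f k else 0) = if (j : ℕ) < m then f j else 0 := by
  induction j using Fin.lastCases with
  | last => simpa using sum_eq_zero fun k _ => if_neg k.isLt.ne'
  | cast j => simp [← Fin.ext_iff]

section BlockCompanion

variable {R : Type*} [CommRing R] {n : Type*} [Fintype n] [DecidableEq n] {m : ℕ}

def blockCompanion (m : ℕ) (c : ℕ → Matrix n n R) :
    Matrix (Fin (m + 1)) (Fin (m + 1)) (Matrix n n R) :=
  of fun i j => if i = 0 then c j else if (j : ℕ) + 1 = i then 1 else 0

def hornerPartial (c : ℕ → Matrix n n R) (x : R) (j : ℕ) : Matrix n n R :=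
  x ^ (j + 1) • 1 - ∑ k ∈ range (j + 1), x ^ (j - k) • c k

omit [Fintype n] in
theorem hornerPartial_zero (c : ℕ → Matrix n n R) (x : R) :
    hornerPartial c x 0 = x • 1 - c 0 := by
  simp [hornerPartial]

omit [Fintype n] in
theorem hornerPartial_succ (c : ℕ → Matrix n n R) (x : R) (j : ℕ) :
    hornerPartial c x (j + 1) = x • hornerPartial c x j - c (j + 1) := by
  rw [hornerPartial, hornerPartial, sum_range_succ, smul_sub, smul_sum, sub_sub]
  simp only [smul_smul, Nat.sub_self, pow_zero, one_smul, ← pow_succ']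
  congr 2
  exact sum_congr rfl fun k hk => by
    rw [Nat.sub_add_comm (Nat.lt_succ_iff.mp (mem_range.mp hk))]

def cyclicBlock (m : ℕ) (X : Matrix n n R) : Matrix (Fin (m + 1)) (Fin (m + 1)) (Matrix n n R) :=
  of fun i j =>
    if i = 0 then (if j = Fin.last m then X else 0) else if (j : ℕ) + 1 = i then -1 else 0

def upperBidiagonal (m : ℕ) (x : R) : Matrix (Fin (m + 1)) (Fin (m + 1)) (Matrix n n R) :=
  of fun i j => if i = j then 1 else if (i : ℕ) + 1 = j then -x • 1 else 0

def hornerRow (m : ℕ) (c : ℕ → Matrix n n R) (x : R) :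
    Matrix (Fin (m + 1)) (Fin (m + 1)) (Matrix n n R) :=
  of fun i j =>
    if i = 0 then (if j = 0 then 1 else -hornerPartial c x (j - 1)) else if i = j then 1 else 0

theorem cyclicBlock_mul_upperBidiagonal (X : Matrix n n R) (x : R) :
    cyclicBlock m X * upperBidiagonal m x =
      of fun i j => if i = 0 then (if j = Fin.last m then X else 0)
        else (if i = j then x • 1 else 0) - (if (j : ℕ) + 1 = i then 1 else 0) := by
  ext1 i j
  rw [mul_apply]
  induction i using Fin.cases with
  | zero =>
    simp only [cyclicBlock, upperBidiagonal, of_apply, if_true, ite_mul, zero_mul, sum_ite_eq',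
      mem_univ]
    split_ifs <;> simp_all [Fin.ext_iff]; omega
  | succ i =>
    simp only [cyclicBlock, upperBidiagonal, of_apply, Fin.succ_ne_zero, if_false, ite_mul,
      zero_mul, neg_mul, one_mul]
    rw [Fintype.sum_eq_single i.castSucc fun k hk => by simp_all [Fin.ext_iff]]
    simp only [Fin.val_castSucc, Fin.val_succ, if_true]
    split_ifs <;> simp_all [Fin.ext_iff]

theorem smul_one_sub_blockCompanion (c : ℕ → Matrix n n R) (x : R) :
    x • 1 - blockCompanion m c =
      hornerRow m c x * cyclicBlock m (hornerPartial c x m) * upperBidiagonal m x := by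
  rw [mul_assoc, cyclicBlock_mul_upperBidiagonal]
  ext1 i j
  rw [mul_apply]
  induction i using Fin.cases with
  | zero =>
    rw [Fin.sum_univ_succ]
    simp only [hornerRow, blockCompanion, of_apply, Fin.succ_ne_zero, if_true, if_false, one_mul,
      mul_sub, mul_ite, mul_zero, mul_one, sum_sub_distrib, Fin.val_succ, Nat.add_sub_cancel,
      Matrix.sub_apply, Matrix.smul_apply, one_apply, Nat.add_right_cancel_iff]
    rw [Fin.sum_ite_succ_eq (fun k => -hornerPartial c x k * x • 1),
      Fin.sum_ite_val_eq (fun k => -hornerPartial c x k)]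
    obtain ⟨j, hj⟩ := j
    simp only [Fin.ext_iff, Fin.val_zero, Fin.val_last, mul_smul_comm, mul_one]
    rcases j with _ | j
    · rcases m.eq_zero_or_pos with rfl | hm
      · simp [hornerPartial_zero]
      · simp [hornerPartial_zero, hm.ne, hm]
    · rcases (Nat.lt_succ_iff.mp hj).eq_or_lt with rfl | hjm
      · simp [hornerPartial_succ]; abel
      · simp [hornerPartial_succ, hjm.ne, hjm]; abel
  | succ i =>
    rw [Fintype.sum_eq_single i.succ fun k hk => by simp [hornerRow, Ne.symm hk]]
    simp [hornerRow, blockCompanion, Fin.succ_ne_zero, Matrix.smul_apply, one_apply]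

omit [Fintype n] in
theorem comp_cyclicBlock_eq_submatrix_finRotate (X : Matrix n n R) :
    comp _ _ n n R (cyclicBlock m X) =
      (comp _ _ n n R (diagonal fun i => if i = 0 then X else -1)).submatrix id
        (Equiv.prodCongrLeft fun _ => finRotate (m + 1)) := by
  ext ⟨i, p⟩ ⟨j, q⟩
  simp only [comp_apply, cyclicBlock, of_apply, submatrix_apply, id, Equiv.prodCongrLeft_apply,
    diagonal_apply, finRotate_apply]
  induction j using Fin.lastCases with
  | last =>
    induction i using Fin.cases with
    | zero => simp [Fin.last_add_one]
    | succ i => simp [Fin.last_add_one, Fin.ext_iff, i.isLt.ne']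
  | cast j =>
    induction i using Fin.cases with
    | zero => simp [Fin.coeSucc_eq_succ, Fin.ext_iff, j.isLt.ne]
    | succ i => simp [Fin.coeSucc_eq_succ, Fin.ext_iff, eq_comm]

theorem det_comp_cyclicBlock (X : Matrix n n R) :
    (comp _ _ n n R (cyclicBlock m X)).det = X.det := by
  rw [comp_cyclicBlock_eq_submatrix_finRotate, det_permute',
    det_comp_of_blockTriangular (blockTriangular_diagonal _), Equiv.Perm.sign_prodCongrLeft,
    Fin.prod_univ_succ]
  simp only [diagonal_apply_eq, sign_finRotate, Fin.succ_ne_zero, if_true, if_false, det_neg,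
    det_one, mul_one, prod_const, card_univ, Fintype.card_fin, Units.val_pow_eq_pow_val,
    Units.val_neg, Units.val_one, Int.cast_pow, Int.cast_neg, Int.cast_one, Nat.add_sub_cancel]
  have hsign : ((-1 : R) ^ m) ^ Fintype.card n * ((-1) ^ Fintype.card n) ^ m = 1 := by
    rw [← pow_mul, ← pow_mul, mul_comm m, ← pow_add, ← two_mul, pow_mul, neg_one_sq, one_pow]
  linear_combination X.det * hsign

theorem det_comp_upperBidiagonal (x : R) :
    (comp _ _ n n R (upperBidiagonal m x)).det = 1 := by
  rw [det_comp_of_blockTriangular fun i j (hji : j < i) => ?_]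
  · simp [upperBidiagonal]
  · have hji' := Fin.lt_def.mp hji
    simp [upperBidiagonal, hji.ne', show (i : ℕ) + 1 ≠ j by omega]

theorem det_comp_hornerRow (c : ℕ → Matrix n n R) (x : R) :
    (comp _ _ n n R (hornerRow m c x)).det = 1 := by
  rw [det_comp_of_blockTriangular fun i j (hji : j < i) => ?_]
  · exact prod_eq_one fun i _ => by by_cases hi : i = 0 <;> simp [hornerRow, hi]
  · simp [hornerRow, hji.ne', (Fin.zero_le j).trans_lt hji |>.ne']

theorem det_smul_one_sub_comp_blockCompanion (c : ℕ → Matrix n n R) (x : R) :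
    (x • 1 - comp _ _ n n R (blockCompanion m c)).det = (hornerPartial c x m).det := by
  have hcomp := congrArg (compAlgEquiv (Fin (m + 1)) n R R) (smul_one_sub_blockCompanion c x)
  simp only [map_sub, map_smul, map_one, map_mul, compAlgEquiv_apply] at hcomp
  rw [hcomp, det_mul, det_mul, det_comp_hornerRow, det_comp_cyclicBlock, det_comp_upperBidiagonal,
    one_mul, mul_one]

end BlockCompanion

section EulerCompanion

variable {n : ℕ}

noncomputable def eulerCoeff (m : ℕ) (A B : Matrix (Fin n) (Fin n) ℂ) :
    ℕ → Matrix (Fin n) (Fin n) ℂ :=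
  fun k => if k = 0 then 1 + (1 / (m : ℂ)) • A else if k = m then (1 / (m : ℂ)) • B else 0

theorem eulerC_map_ofReal (m : ℕ) (A B : Matrix (Fin n) (Fin n) ℝ) :
    (eulerC n m A B).map Complex.ofReal =
      comp _ _ _ _ ℂ (blockCompanion m
        (eulerCoeff m (A.map Complex.ofReal) (B.map Complex.ofReal))) := by
  ext ⟨i, p⟩ ⟨j, q⟩
  simp only [map_apply, eulerC, comp_apply, blockCompanion, eulerCoeff, of_apply,
    Fin.val_eq_zero_iff]
  split_ifs <;> simp [one_apply, *]

theorem hornerPartial_eulerCoeff {m : ℕ} (hm : 0 < m) (A B : Matrix (Fin n) (Fin n) ℂ) (x : ℂ) :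
    hornerPartial (eulerCoeff m A B) x m =
      (x ^ (m + 1) - x ^ m) • 1 - ((1 / (m : ℂ)) * x ^ m) • A - (1 / (m : ℂ)) • B := by
  rw [hornerPartial, sum_range_succ, sum_eq_single 0 (fun k hk hk0 => by
    simp [eulerCoeff, hk0, (mem_range.mp hk).ne]) (by simp [hm])]
  simp [eulerCoeff, hm.ne']
  module

end EulerCompanion

theorem stmt_6_general (n m : ℕ) (hm : 0 < m) (A B : Matrix (Fin n) (Fin n) ℝ) :
    (∀ lam : ℂ,
      Matrix.det (lam • (1 : Matrix (Fin (m+1) × Fin n) (Fin (m+1) × Fin n) ℂ)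
          - (eulerC n m A B).map Complex.ofReal) =
        Matrix.det ((lam ^ (m+1) - lam ^ m) • (1 : Matrix (Fin n) (Fin n) ℂ)
          - ((1 / (m : ℂ)) * lam ^ m) • A.map Complex.ofReal
          - (1 / (m : ℂ)) • B.map Complex.ofReal)) ∧
    (∀ lam : ℂ, lam ≠ 0 →
      (Matrix.det (lam • (1 : Matrix (Fin (m+1) × Fin n) (Fin (m+1) × Fin n) ℂ)
          - (eulerC n m A B).map Complex.ofReal) = 0 ↔
        Matrix.det (((lam - 1) * lam ^ m) • (1 : Matrix (Fin n) (Fin n) ℂ)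
          - ((1 / (m : ℂ)) * lam ^ m) • A.map Complex.ofReal
          - (1 / (m : ℂ)) • B.map Complex.ofReal) = 0)) := by
  refine ⟨fun lam => ?_, fun lam _ => ?_⟩ <;>
    rw [eulerC_map_ofReal, det_smul_one_sub_comp_blockCompanion, hornerPartial_eulerCoeff hm]
  rw [sub_one_mul, ← pow_succ']

theorem stmt_6 (n m : ℕ) (hn : 0 < n) (hm : 0 < m) (A B : Matrix (Fin n) (Fin n) ℝ) :
    (∀ lam : ℂ,
      Matrix.det (lam • (1 : Matrix (Fin (m+1) × Fin n) (Fin (m+1) × Fin n) ℂ)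
          - (eulerC n m A B).map Complex.ofReal) =
        Matrix.det ((lam ^ (m+1) - lam ^ m) • (1 : Matrix (Fin n) (Fin n) ℂ)
          - ((1 / (m : ℂ)) * lam ^ m) • A.map Complex.ofReal
          - (1 / (m : ℂ)) • B.map Complex.ofReal)) ∧
    (∀ lam : ℂ, lam ≠ 0 →
      (Matrix.det (lam • (1 : Matrix (Fin (m+1) × Fin n) (Fin (m+1) × Fin n) ℂ)
          - (eulerC n m A B).map Complex.ofReal) = 0 ↔
        Matrix.det (((lam - 1) * lam ^ m) • (1 : Matrix (Fin n) (Fin n) ℂ)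
          - ((1 / (m : ℂ)) * lam ^ m) • A.map Complex.ofReal
          - (1 / (m : ℂ)) • B.map Complex.ofReal) = 0)) :=
  stmt_6_general n m hm A B
end

section
/- Assume assumption A holds. Then there exists ε₀ > 0 such that for every positive integer m with 1/m < ε₀ (ε = 1/m), the only complex eigenvalue of the Euler companion matrix C of modulus 1 is the eigenvalue 1; that is, if λ ∈ ℂ satisfies det(λI − C) = 0 and |λ| = 1, then λ = 1. -/
open Matrix

/-- The characteristic function `Δ(μ) = det(μ I - A - e^{-μ} B)` of the linear DDE
`ż(t) = A z(t) + B z(t-1)`. -/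
noncomputable def charDDE (n : ℕ) (A B : Matrix (Fin n) (Fin n) ℝ) (μ : ℂ) : ℂ :=
  Matrix.det (μ • (1 : Matrix (Fin n) (Fin n) ℂ)
    - A.map (Complex.ofReal) - Complex.exp (-μ) • B.map (Complex.ofReal))

/-- Assumption A: `0` is a root of `Δ` of algebraic multiplicity 2 and geometric
multiplicity 1, and every nonzero root has nonzero real part. -/
def AssumptionA (n : ℕ) (A B : Matrix (Fin n) (Fin n) ℝ) : Prop :=
  charDDE n A B 0 = 0 ∧
  deriv (charDDE n A B) 0 = 0 ∧
  iteratedDeriv 2 (charDDE n A B) 0 ≠ 0 ∧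
  Module.finrank ℝ (LinearMap.ker ((A + B).mulVecLin)) = 1 ∧
  ∀ μ : ℂ, μ ≠ 0 → charDDE n A B μ = 0 → μ.re ≠ 0

/-!
An eigenvalue `λ ≠ 1` of `C` with `|λ| = 1` yields, for `ν = m (λ - 1)` and
`c = λ⁻ᵐ = (1 + ν/m)⁻ᵐ`, a singular matrix `ν - A - c B`. Then `ν` is bounded and
`Re ν = -|ν|² / (2m)`, so `ν` is close to the imaginary axis. As `c = e^{-ν} + O(|ν|²/m)`
and `(c, μ) ↦ det (μ - A - c B)` is locally Lipschitz, `|Δ(ν)| = O(|ν|²/m)`. On the other hand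
`Δ(z) = z² h(z)` with `h(0) ≠ 0`, and `Δ` has no other roots on the imaginary axis, so by
compactness `|Δ(ν)| ≥ ρ |ν|²` for bounded `ν` near that axis: a contradiction once `m` is large.
-/

open Complex Filter Metric

noncomputable def pencilDet (n : ℕ) (A B : Matrix (Fin n) (Fin n) ℝ) (p : ℂ × ℂ) : ℂ :=
  Matrix.det (p.2 • (1 : Matrix (Fin n) (Fin n) ℂ) - A.map ofReal - p.1 • B.map ofReal)

lemma charDDE_eq_pencilDet (n : ℕ) (A B : Matrix (Fin n) (Fin n) ℝ) (μ : ℂ) :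
    charDDE n A B μ = pencilDet n A B (exp (-μ), μ) := rfl

lemma contDiff_pencilDet (n : ℕ) (A B : Matrix (Fin n) (Fin n) ℝ) :
    ContDiff ℂ 1 (pencilDet n A B) := by
  unfold pencilDet
  simp only [Matrix.det_apply, Matrix.sub_apply, Matrix.smul_apply, smul_eq_mul]
  fun_prop

lemma differentiable_charDDE (n : ℕ) (A B : Matrix (Fin n) (Fin n) ℝ) :
    Differentiable ℂ (charDDE n A B) := by
  rw [funext (charDDE_eq_pencilDet n A B)]
  exact ((contDiff_pencilDet n A B).differentiable one_ne_zero).comp (by fun_prop)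

lemma exists_eq_sq_mul_of_deriv_eq_zero {f : ℂ → ℂ} (hf : Differentiable ℂ f)
    (h0 : f 0 = 0) (h1 : deriv f 0 = 0) (h2 : iteratedDeriv 2 f 0 ≠ 0) :
    ∃ h : ℂ → ℂ, Continuous h ∧ h 0 ≠ 0 ∧ ∀ z, f z = z ^ 2 * h z := by
  set g := dslope f 0
  have hg : Differentiable ℂ g := by
    simpa [← differentiableOn_univ] using (differentiableOn_dslope univ_mem).2 hf.differentiableOn
  refine ⟨dslope g 0, ?_, ?_, fun z => ?_⟩
  · simpa [← differentiableOn_univ] using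
      ((differentiableOn_dslope univ_mem).2 hg.differentiableOn).continuousOn
  · obtain ⟨p, hp⟩ := hf.analyticAt 0
    have hh : HasFPowerSeriesAt (dslope g 0) p.fslope.fslope 0 :=
      hp.has_fpower_series_dslope_fslope.has_fpower_series_dslope_fslope
    have hcoeff : iteratedDeriv 2 f 0 = (Nat.factorial 2) • p.coeff 2 := by
      obtain ⟨r, hr⟩ := hp
      rw [iteratedDeriv_eq_iteratedFDeriv, ← hr.factorial_smul (y := 1) 2]
      rfl
    rw [← hh.coeff_zero (fun _ => 1)]
    show p.fslope.fslope.coeff 0 ≠ 0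
    rw [FormalMultilinearSeries.coeff_fslope, FormalMultilinearSeries.coeff_fslope]
    rintro hzero
    simp [hcoeff, hzero] at h2
  · have hf' := sub_smul_dslope f 0 z
    have hg' := sub_smul_dslope g 0 z
    have : g 0 = 0 := by simp [g, dslope_same, h1]
    simp only [sub_zero, smul_eq_mul, h0, this] at hf' hg'
    rw [← hf', show dslope f 0 z = g z from rfl, ← hg']; ring

lemma exists_mul_sq_le_norm_of_abs_re_lt {f h : ℂ → ℂ} (hh : Continuous h) (hh0 : h 0 ≠ 0)
    (hfh : ∀ z, f z = z ^ 2 * h z) (hroots : ∀ μ, μ ≠ 0 → f μ = 0 → μ.re ≠ 0) (K : ℝ) :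
    ∃ ρ > 0, ∀ ν : ℂ, ‖ν‖ ≤ K → |ν.re| < ρ → ρ * ‖ν‖ ^ 2 ≤ ‖f ν‖ := by
  rcases lt_or_ge K 0 with hK | hK
  · exact ⟨1, one_pos, fun ν hν _ => absurd hν (by linarith [norm_nonneg ν])⟩
  -- `‖h‖ + |re|` vanishes nowhere, so it has a positive minimum on the compact ball
  obtain ⟨ν₀, -, hmin⟩ := (isCompact_closedBall (0 : ℂ) K).exists_isMinOn
    (nonempty_closedBall.2 hK) (by fun_prop : Continuous fun ν => ‖h ν‖ + |ν.re|).continuousOn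
  have hpos : 0 < ‖h ν₀‖ + |ν₀.re| := by
    by_contra! hle
    have hh : h ν₀ = 0 := norm_eq_zero.1 (by linarith [norm_nonneg (h ν₀), abs_nonneg ν₀.re])
    have hre : ν₀.re = 0 := abs_eq_zero.1 (by linarith [norm_nonneg (h ν₀), abs_nonneg ν₀.re])
    rcases eq_or_ne ν₀ 0 with rfl | hν₀
    · exact hh0 hh
    · exact hroots ν₀ hν₀ (by simp [hfh, hh]) hre
  refine ⟨(‖h ν₀‖ + |ν₀.re|) / 2, by positivity, fun ν hν hre => ?_⟩
  have hmin' : ‖h ν₀‖ + |ν₀.re| ≤ ‖h ν‖ + |ν.re| := hmin (mem_closedBall_zero_iff.2 hν)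
  rw [hfh, norm_mul, norm_pow, mul_comm]
  gcongr
  linarith

section
attribute [local instance] Matrix.linftyOpNormedAddCommGroup

lemma Matrix.exists_norm_le_of_det_smul_one_sub_sub_smul_eq_zero {ι 𝕜 : Type*} [Fintype ι]
    [DecidableEq ι] [NormedField 𝕜] (A B : Matrix ι ι 𝕜) :
    ∃ K, ∀ c ν : 𝕜, ‖c‖ ≤ 1 → (ν • 1 - A - c • B).det = 0 → ‖ν‖ ≤ K := by
  refine ⟨‖A‖ + ‖B‖, fun c ν hc hdet => ?_⟩
  obtain ⟨w, hw, hmul⟩ := Matrix.exists_mulVec_eq_zero_iff.2 hdet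
  have hνw : ν • w = A *ᵥ w + c • (B *ᵥ w) := by
    rw [Matrix.sub_mulVec, Matrix.sub_mulVec, Matrix.smul_mulVec, Matrix.one_mulVec,
      Matrix.smul_mulVec, sub_sub, sub_eq_zero] at hmul
    exact hmul
  have hle : ‖ν‖ * ‖w‖ ≤ (‖A‖ + ‖B‖) * ‖w‖ := by
    calc ‖ν‖ * ‖w‖ = ‖A *ᵥ w + c • (B *ᵥ w)‖ := by rw [← hνw, norm_smul]
      _ ≤ ‖A‖ * ‖w‖ + 1 * (‖B‖ * ‖w‖) := by
        refine (norm_add_le _ _).trans (add_le_add (Matrix.linfty_opNorm_mulVec A w) ?_)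
        rw [norm_smul]
        exact mul_le_mul hc (Matrix.linfty_opNorm_mulVec B w) (norm_nonneg _) zero_le_one
      _ = (‖A‖ + ‖B‖) * ‖w‖ := by ring
  exact le_of_mul_le_mul_right hle (norm_pos_iff.2 hw)

end

lemma eulerC_mulVec_succ (n m : ℕ) (A B : Matrix (Fin n) (Fin n) ℝ)
    (v : Fin (m + 1) × Fin n → ℂ) (i : Fin m) (p : Fin n) :
    ((eulerC n m A B).map ofReal *ᵥ v) (i.succ, p) = v (i.castSucc, p) := by
  rw [Matrix.mulVec, dotProduct, Fintype.sum_prod_type, Finset.sum_eq_single i.castSucc,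
    Finset.sum_eq_single p]
  · simp [eulerC, Fin.succ_ne_zero]
  · intro q _ hq; simp [eulerC, Fin.succ_ne_zero, Ne.symm hq]
  · simp
  · intro j _ hj
    have : (j : ℕ) ≠ i := fun h => hj (Fin.ext (by simpa using h))
    simp [eulerC, Fin.succ_ne_zero, this]
  · simp

lemma eulerC_mulVec_zero (n m : ℕ) (A B : Matrix (Fin n) (Fin n) ℝ)
    (v : Fin (m + 1) × Fin n → ℂ) (p : Fin n) :
    ((eulerC n m A B).map ofReal *ᵥ v) (0, p) = v (0, p) + (1 / m : ℂ) *
      ((A.map ofReal *ᵥ fun q => v (0, q)) p + (B.map ofReal *ᵥ fun q => v (Fin.last m, q)) p) := by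
  rw [Matrix.mulVec, dotProduct, Fintype.sum_prod_type]
  rcases m with _ | k
  · simp [Matrix.mulVec, dotProduct, eulerC, apply_ite ofReal]
  · have hlt (i : Fin k) : (i : ℕ) ≠ k := i.isLt.ne
    rw [Fin.sum_univ_succ, Fin.sum_univ_castSucc]
    simp [Matrix.mulVec, dotProduct, eulerC, Fin.succ_ne_zero, hlt, apply_ite ofReal,
      Finset.sum_add_distrib, add_mul, mul_assoc]
    rw [mul_add, Finset.mul_sum, Finset.mul_sum, add_assoc]

lemma pencilDet_eq_zero_of_det_eulerC_eq_zero {n m : ℕ} (hm : 0 < m)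
    (A B : Matrix (Fin n) (Fin n) ℝ) {lam : ℂ} (hlam : lam ≠ 0)
    (hdet : Matrix.det (lam • (1 : Matrix (Fin (m + 1) × Fin n) (Fin (m + 1) × Fin n) ℂ)
      - (eulerC n m A B).map ofReal) = 0) :
    pencilDet n A B ((lam ^ m)⁻¹, m * (lam - 1)) = 0 := by
  obtain ⟨v, hv, hmul⟩ := Matrix.exists_mulVec_eq_zero_iff.2 hdet
  have hCv : (eulerC n m A B).map ofReal *ᵥ v = lam • v := by
    rw [Matrix.sub_mulVec, Matrix.smul_mulVec, Matrix.one_mulVec, sub_eq_zero] at hmul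
    exact hmul.symm
  set w : Fin n → ℂ := fun q => v (Fin.last m, q)
  -- an eigenvector is determined by its last block: block `j` is `lam ^ (m - j) • w`
  have hblock : ∀ j : Fin (m + 1), (fun q => v (j, q)) = lam ^ (m - j : ℕ) • w := by
    refine Fin.reverseInduction (by simp [w]) fun i ih => funext fun q => ?_
    have h := congrFun hCv (i.succ, q)
    rw [eulerC_mulVec_succ, Pi.smul_apply, smul_eq_mul, congrFun ih q] at h
    have hi : m - i = m - (i + 1) + 1 := by omega
    simp [h, hi, pow_succ]
    ring
  have hw : w ≠ 0 := by
    refine fun hw0 => hv (funext fun jq => ?_)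
    simpa [hw0] using congrFun (hblock jq.1) jq.2
  refine Matrix.exists_mulVec_eq_zero_iff.1 ⟨w, hw, funext fun p => ?_⟩
  have h0 := congrFun hCv (0, p)
  have hv0 : v (0, p) = lam ^ m * w p := by simpa using congrFun (hblock 0) p
  rw [eulerC_mulVec_zero, hblock 0] at h0
  change _ + _ * (_ + (B.map ofReal *ᵥ w) p) = _ at h0
  have hm' : (m : ℂ) ≠ 0 := Nat.cast_ne_zero.2 hm.ne'
  simp only [Matrix.sub_mulVec, Matrix.smul_mulVec, Matrix.one_mulVec, Matrix.mulVec_smul,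
    Pi.sub_apply, Pi.smul_apply, smul_eq_mul, Pi.zero_apply, hv0, Fin.val_zero,
    Nat.sub_zero] at h0 ⊢
  field_simp at h0 ⊢
  linear_combination -h0

lemma norm_inv_one_add_div_pow_sub_exp_neg_le {m : ℕ} (hm : 0 < m) {ν : ℂ}
    (h1 : 2 * ‖ν‖ ≤ m) (h2 : ‖ν‖ ^ 2 ≤ m) :
    ‖((1 + ν / m) ^ m)⁻¹ - exp (-ν)‖ ≤ 2 * Real.exp ‖ν‖ * ‖ν‖ ^ 2 / m := by
  have hm0 : (0 : ℝ) < m := Nat.cast_pos.2 hm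
  have hmC : (m : ℂ) ≠ 0 := Nat.cast_ne_zero.2 hm.ne'
  set w := ν / m
  have hw : ‖w‖ ≤ 1 / 2 := by
    rw [norm_div, norm_natCast, div_le_iff₀ hm0]; linarith
  have hw1 : (1 : ℂ) + w ≠ 0 := by
    intro h
    have : ‖w‖ = 1 := by rw [eq_neg_of_add_eq_zero_right h, norm_neg, norm_one]
    linarith
  -- `(1 + w)^m = exp (ν - δ)` with `δ := ν - m log (1 + w) = m (w - log (1 + w)) = O(‖ν‖²/m)`
  set δ := ν - m * log (1 + w)
  have hδ : ‖δ‖ ≤ ‖ν‖ ^ 2 / m := by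
    have hlog := norm_log_one_add_sub_self_le (hw.trans_lt (by norm_num))
    have hinv : (1 - ‖w‖)⁻¹ ≤ 2 := by
      rw [inv_le_comm₀ (by linarith) two_pos]; linarith
    have : δ = -(m * (log (1 + w) - w)) := by simp only [δ, w]; field_simp; ring
    rw [this, norm_neg, norm_mul, norm_natCast]
    calc (m : ℝ) * ‖log (1 + w) - w‖ ≤ m * ‖w‖ ^ 2 := by
          gcongr
          calc _ ≤ ‖w‖ ^ 2 * (1 - ‖w‖)⁻¹ / 2 := hlog
            _ ≤ ‖w‖ ^ 2 * 2 / 2 := by gcongr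
            _ = ‖w‖ ^ 2 := by ring
      _ = ‖ν‖ ^ 2 / m := by simp only [w, norm_div, norm_natCast]; field_simp
  have hsplit : ((1 + w) ^ m)⁻¹ - exp (-ν) = exp (-ν) * (exp δ - 1) := by
    rw [← exp_log hw1, ← exp_nat_mul, ← exp_neg, mul_sub, mul_one, ← exp_add]
    congr 2; ring
  rw [hsplit, norm_mul, norm_exp]
  have hexp : Real.exp (-ν).re ≤ Real.exp ‖ν‖ :=
    Real.exp_le_exp.2 ((re_le_norm _).trans (norm_neg ν).le)
  calc Real.exp (-ν).re * ‖exp δ - 1‖ ≤ Real.exp ‖ν‖ * (2 * (‖ν‖ ^ 2 / m)) := by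
        gcongr
        exact (norm_exp_sub_one_le (hδ.trans ((div_le_one hm0).2 h2))).trans (by gcongr)
    _ = 2 * Real.exp ‖ν‖ * ‖ν‖ ^ 2 / m := by ring

lemma norm_charDDE_le_of_pencilDet_eq_zero {n : ℕ} {A B : Matrix (Fin n) (Fin n) ℝ} {K : ℝ}
    {L : NNReal} (hL : LipschitzOnWith L (pencilDet n A B) (closedBall 0 (Real.exp K + K)))
    {m : ℕ} (hm : 0 < m) (hKm : 2 * K ≤ m) (hK2m : K ^ 2 ≤ m) {ν : ℂ} (hνK : ‖ν‖ ≤ K)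
    (hc : ‖(1 + ν / m) ^ m‖ = 1) (hzero : pencilDet n A B (((1 + ν / m) ^ m)⁻¹, ν) = 0) :
    ‖charDDE n A B ν‖ ≤ L * (2 * Real.exp K * ‖ν‖ ^ 2 / m) := by
  have hK : 0 ≤ K := (norm_nonneg ν).trans hνK
  have hexp : ‖exp (-ν)‖ ≤ Real.exp K := by
    rw [norm_exp]
    exact Real.exp_le_exp.2 (((re_le_norm _).trans (norm_neg ν).le).trans hνK)
  have hmem : ∀ c : ℂ, ‖c‖ ≤ Real.exp K → (c, ν) ∈ closedBall (0 : ℂ × ℂ) (Real.exp K + K) := by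
    intro c hc
    rw [mem_closedBall_zero_iff, Prod.norm_def]
    exact max_le (by linarith) (by linarith [Real.exp_pos K])
  have hc' : ‖((1 + ν / m) ^ m)⁻¹‖ ≤ Real.exp K := by
    rw [norm_inv, hc, inv_one]; exact Real.one_le_exp hK
  rw [charDDE_eq_pencilDet, ← sub_zero (pencilDet n A B _), ← hzero]
  refine (hL.norm_sub_le (hmem _ hexp) (hmem _ hc')).trans (mul_le_mul_of_nonneg_left ?_ L.2)
  rw [Prod.mk_sub_mk, sub_self, Prod.norm_def, norm_zero, max_eq_left (norm_nonneg _),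
    norm_sub_rev]
  refine (norm_inv_one_add_div_pow_sub_exp_neg_le hm (by linarith)
    ((pow_le_pow_left₀ (norm_nonneg ν) hνK 2).trans hK2m)).trans ?_
  gcongr

lemma abs_re_natCast_mul_sub_one_le {lam : ℂ} (hlam : ‖lam‖ = 1) (m : ℕ) :
    |((m : ℂ) * (lam - 1)).re| ≤ ‖(m : ℂ) * (lam - 1)‖ ^ 2 / m := by
  rcases m.eq_zero_or_pos with rfl | hm
  · simp
  have hm0 : (0 : ℝ) < m := Nat.cast_pos.2 hm
  have h1 : lam.re * lam.re + lam.im * lam.im = 1 := by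
    rw [← normSq_apply, ← Complex.sq_norm, hlam, one_pow]
  have hre : lam.re ≤ 1 := by nlinarith
  rw [norm_mul, Complex.norm_natCast, mul_pow, Complex.sq_norm, normSq_apply]
  simp only [mul_re, natCast_re, natCast_im, sub_re, one_re, sub_im, one_im, zero_mul, sub_zero,
    abs_mul, Nat.abs_cast, abs_of_nonpos (sub_nonpos.2 hre)]
  rw [le_div_iff₀ hm0]
  nlinarith

lemma exists_pencilDet_ne_zero {n : ℕ} {A B : Matrix (Fin n) (Fin n) ℝ} {K ρ : ℝ}
    (hK : ∀ c ν, ‖c‖ ≤ 1 → pencilDet n A B (c, ν) = 0 → ‖ν‖ ≤ K) (hρ : 0 < ρ)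
    (hlow : ∀ ν : ℂ, ‖ν‖ ≤ K → |ν.re| < ρ → ρ * ‖ν‖ ^ 2 ≤ ‖charDDE n A B ν‖) :
    ∃ N : ℝ, ∀ m : ℕ, N < m → ∀ lam : ℂ, ‖lam‖ = 1 → lam ≠ 1 →
      pencilDet n A B ((lam ^ m)⁻¹, m * (lam - 1)) ≠ 0 := by
  obtain ⟨L, hL⟩ := (contDiff_pencilDet n A B).locallyLipschitz.locallyLipschitzOn
    |>.exists_lipschitzOnWith_of_compact (isCompact_closedBall (0 : ℂ × ℂ) (Real.exp K + K))
  refine ⟨max (max (2 * K) (K ^ 2)) (max (K ^ 2 / ρ) (L * (2 * Real.exp K) / ρ)),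
    fun m hNm lam hlam hne hzero => ?_⟩
  simp only [max_lt_iff] at hNm
  obtain ⟨⟨h2K, hK2⟩, hKρ, hLρ⟩ := hNm
  have hm : 0 < m := by exact_mod_cast (by positivity : 0 ≤ K ^ 2 / ρ).trans_lt hKρ
  have hm0 : (0 : ℝ) < m := Nat.cast_pos.2 hm
  set ν := (m : ℂ) * (lam - 1)
  have hν0 : ν ≠ 0 := mul_ne_zero (Nat.cast_ne_zero.2 hm.ne') (sub_ne_zero.2 hne)
  have hlam' : 1 + ν / m = lam := by
    rw [mul_div_cancel_left₀ _ (Nat.cast_ne_zero.2 hm.ne')]; ring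
  have hνK : ‖ν‖ ≤ K := hK _ _ (by simp [hlam]) hzero
  have hre : |ν.re| < ρ := by
    refine (abs_re_natCast_mul_sub_one_le hlam m).trans_lt ?_
    rw [div_lt_iff₀ hm0]
    rw [div_lt_iff₀ hρ] at hKρ
    nlinarith [pow_le_pow_left₀ (norm_nonneg ν) hνK 2]
  have hupper := norm_charDDE_le_of_pencilDet_eq_zero hL hm h2K.le hK2.le hνK
    (by simp [hlam', hlam]) (by rwa [hlam'])
  have hν2 : 0 < ‖ν‖ ^ 2 := by positivity
  have hsmall : (L : ℝ) * (2 * Real.exp K * ‖ν‖ ^ 2 / m) < ρ * ‖ν‖ ^ 2 := by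
    rw [div_lt_iff₀ hρ] at hLρ
    rw [← mul_div_assoc, div_lt_iff₀ hm0]
    nlinarith
  linarith [hlow ν hνK hre]

theorem stmt_8_general (n : ℕ) (A B : Matrix (Fin n) (Fin n) ℝ)
    (hA : AssumptionA n A B) :
    ∃ ε₀ > (0 : ℝ), ∀ m : ℕ, 0 < m → (1 : ℝ) / m < ε₀ →
      ∀ lam : ℂ,
        Matrix.det (lam • (1 : Matrix (Fin (m+1) × Fin n) (Fin (m+1) × Fin n) ℂ)
          - (eulerC n m A B).map Complex.ofReal) = 0 →
        ‖lam‖ = 1 → lam = 1 := by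
  obtain ⟨hΔ0, hΔ1, hΔ2, -, hroots⟩ := hA
  obtain ⟨h, hh, hh0, hfac⟩ :=
    exists_eq_sq_mul_of_deriv_eq_zero (differentiable_charDDE n A B) hΔ0 hΔ1 hΔ2
  obtain ⟨K, hK⟩ :=
    Matrix.exists_norm_le_of_det_smul_one_sub_sub_smul_eq_zero (A.map ofReal) (B.map ofReal)
  obtain ⟨ρ, hρ, hlow⟩ := exists_mul_sq_le_norm_of_abs_re_lt hh hh0 hfac hroots K
  obtain ⟨N, hN⟩ := exists_pencilDet_ne_zero hK hρ hlow
  refine ⟨1 / (|N| + 1), by positivity, fun m hm hmN lam hdet hlam => ?_⟩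
  by_contra hne
  have hNm : N < m := by
    rw [div_lt_div_iff₀ (Nat.cast_pos.2 hm) (by positivity), one_mul, one_mul] at hmN
    linarith [le_abs_self N]
  exact hN m hNm lam hlam hne (pencilDet_eq_zero_of_det_eulerC_eq_zero hm A B
    (norm_pos_iff.1 (hlam ▸ one_pos)) hdet)

theorem stmt_8 (n : ℕ) (hn : 0 < n) (A B : Matrix (Fin n) (Fin n) ℝ)
    (hA : AssumptionA n A B) :
    ∃ ε₀ > (0 : ℝ), ∀ m : ℕ, 0 < m → (1 : ℝ) / m < ε₀ →
      ∀ lam : ℂ,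
        Matrix.det (lam • (1 : Matrix (Fin (m+1) × Fin n) (Fin (m+1) × Fin n) ℂ)
          - (eulerC n m A B).map Complex.ofReal) = 0 →
        ‖lam‖ = 1 → lam = 1 :=
  stmt_8_general n A B hA
end

section
/- Let N be a positive integer and M an N×N complex matrix. Suppose dim ker(M − I) = 1, there exist vectors φ₁ ≠ 0 and φ₂ in ℂ^N with (M − I)φ₁ = 0 and (M − I)φ₂ = φ₁, and a row vector ψ₂ with ψ₂(M − I) = 0 and ψ₂·φ₂ ≠ 0. Then the algebraic multiplicity of the eigenvalue 1 of M is exactly 2, i.e. (X − 1)² divides the characteristic polynomial of M but (X − 1)³ does not. -/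
/-!
Put `f = M - 1`. Since `ker f` is the line through `φ₁` and `f φ₂ = φ₁`, a vector killed by `f²`
is a combination `a φ₂ + b φ₁`, so `ker f² = span {φ₁, φ₂}` is a plane. A Jordan chain of length
three would produce `v` with `f v = a φ₂ + b φ₁` and `a ≠ 0`; but `ψ₂` annihilates the range of `f`
and `φ₁ = f φ₂`, so applying it gives `a (ψ₂ ⬝ φ₂) = 0`, forcing `a = 0`. Hence the kernels of the
powers of `f` stabilise at `ker f²`, the generalised eigenspace of `M` for `1` is two-dimensional,
and this dimension is the multiplicity of `1` as a root of the characteristic polynomial.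
-/

open Matrix Polynomial

namespace Module.End

variable {K V : Type*} [Field K] [AddCommGroup V] [Module K V] {f : End K V} {v₁ v₂ : V}

theorem apply_eq_zero_of_ker_eq_span_singleton (hker : LinearMap.ker f = K ∙ v₁) : f v₁ = 0 := by
  rw [← LinearMap.mem_ker, hker]
  exact Submodule.mem_span_singleton_self v₁

theorem exists_eq_smul_add_smul_of_apply_apply_eq_zero (hker : LinearMap.ker f = K ∙ v₁)
    (hv₂ : f v₂ = v₁) {v : V} (hv : f (f v) = 0) : ∃ a b : K, v = a • v₂ + b • v₁ := by
  obtain ⟨a, ha⟩ := Submodule.mem_span_singleton.mp (hker ▸ hv : f v ∈ K ∙ v₁)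
  have : v - a • v₂ ∈ K ∙ v₁ := by
    rw [← hker, LinearMap.mem_ker, map_sub, map_smul, hv₂, ha, sub_self]
  obtain ⟨b, hb⟩ := Submodule.mem_span_singleton.mp this
  exact ⟨a, b, by rw [hb, add_sub_cancel]⟩

theorem ker_sq_eq_span_pair (hker : LinearMap.ker f = K ∙ v₁) (hv₂ : f v₂ = v₁) :
    LinearMap.ker (f ^ 2) = Submodule.span K {v₁, v₂} := by
  ext v
  rw [LinearMap.mem_ker, pow_two, mul_apply, Submodule.mem_span_pair]
  constructor
  · intro hv
    obtain ⟨a, b, rfl⟩ := exists_eq_smul_add_smul_of_apply_apply_eq_zero hker hv₂ hv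
    exact ⟨b, a, add_comm _ _⟩
  · rintro ⟨b, a, rfl⟩
    simp [apply_eq_zero_of_ker_eq_span_singleton hker, hv₂]

theorem linearIndependent_pair_of_apply_eq (hv₁ : v₁ ≠ 0) (hfv₁ : f v₁ = 0) (hv₂ : f v₂ = v₁) :
    LinearIndependent K ![v₁, v₂] := by
  refine (LinearIndependent.pair_iff' hv₁).mpr fun a ha ↦ hv₁ ?_
  rw [← hv₂, ← ha, map_smul, hfv₁, smul_zero]

theorem finrank_ker_sq_eq_two (hv₁ : v₁ ≠ 0) (hker : LinearMap.ker f = K ∙ v₁)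
    (hv₂ : f v₂ = v₁) : Module.finrank K (LinearMap.ker (f ^ 2)) = 2 := by
  have hind := linearIndependent_pair_of_apply_eq hv₁ (apply_eq_zero_of_ker_eq_span_singleton hker) hv₂
  rw [ker_sq_eq_span_pair hker hv₂, ← Matrix.range_cons_cons_empty v₁ v₂ ![],
    finrank_span_eq_card hind, Fintype.card_fin]

theorem ker_sq_eq_ker_pow_three (hker : LinearMap.ker f = K ∙ v₁) (hv₂ : f v₂ = v₁)
    (ψ : V →ₗ[K] K) (hψ : ψ ∘ₗ f = 0) (hψv₂ : ψ v₂ ≠ 0) :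
    LinearMap.ker (f ^ 2) = LinearMap.ker (f ^ (2 + 1)) := by
  have hψf (w : V) : ψ (f w) = 0 := LinearMap.congr_fun hψ w
  refine le_antisymm (LinearMap.ker_le_ker_comp _ _) fun v hv ↦ ?_
  rw [LinearMap.mem_ker, pow_succ', pow_two] at hv
  rw [LinearMap.mem_ker, pow_two]
  simp only [mul_apply] at hv ⊢
  obtain ⟨a, b, hfv⟩ := exists_eq_smul_add_smul_of_apply_apply_eq_zero hker hv₂ hv
  have ha : a * ψ v₂ = 0 := by
    have := hψf v
    rwa [hfv, map_add, map_smul, map_smul, ← hv₂, hψf, smul_zero, add_zero, smul_eq_mul] at this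
  rw [hfv, (mul_eq_zero.mp ha).resolve_right hψv₂, zero_smul, zero_add, map_smul,
    apply_eq_zero_of_ker_eq_span_singleton hker, smul_zero]

theorem maxGenEigenspace_zero_eq_ker_pow {k : ℕ}
    (h : LinearMap.ker (f ^ k) = LinearMap.ker (f ^ (k + 1))) :
    f.maxGenEigenspace 0 = LinearMap.ker (f ^ k) := by
  ext v
  simp only [mem_maxGenEigenspace, zero_smul, sub_zero, LinearMap.mem_ker]
  refine ⟨fun ⟨n, hn⟩ ↦ ?_, fun hv ↦ ⟨k, hv⟩⟩
  rw [← LinearMap.mem_ker, ker_pow_constant h n, pow_add]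
  simp [hn]

theorem finrank_maxGenEigenspace_zero_eq_two (hv₁ : v₁ ≠ 0) (hker : LinearMap.ker f = K ∙ v₁)
    (hv₂ : f v₂ = v₁) (ψ : V →ₗ[K] K) (hψ : ψ ∘ₗ f = 0) (hψv₂ : ψ v₂ ≠ 0) :
    Module.finrank K (f.maxGenEigenspace 0) = 2 := by
  rw [maxGenEigenspace_zero_eq_ker_pow (ker_sq_eq_ker_pow_three hker hv₂ ψ hψ hψv₂),
    finrank_ker_sq_eq_two hv₁ hker hv₂]

end Module.End

theorem stmt_9_general (N : ℕ) (M : Matrix (Fin N) (Fin N) ℂ)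
    (hker : Module.finrank ℂ (LinearMap.ker ((M - 1).mulVecLin)) = 1)
    (φ₁ φ₂ : Fin N → ℂ) (hφ₁ : φ₁ ≠ 0)
    (h1 : (M - 1) *ᵥ φ₁ = 0)
    (h2 : (M - 1) *ᵥ φ₂ = φ₁)
    (ψ₂ : Fin N → ℂ)
    (h3 : ψ₂ ᵥ* (M - 1) = 0)
    (h4 : ψ₂ ⬝ᵥ φ₂ ≠ 0) :
    (X - 1) ^ 2 ∣ M.charpoly ∧ ¬ (X - 1) ^ 3 ∣ M.charpoly := by
  have hker_eq : LinearMap.ker (M - 1).mulVecLin = ℂ ∙ φ₁ :=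
    eq_span_singleton_of_mem_of_finrank_eq_one hker h1 hφ₁
  have hψ : dotProductBilin ℂ ℂ ψ₂ ∘ₗ (M - 1).mulVecLin = 0 :=
    LinearMap.ext fun v ↦ by
      simp only [LinearMap.comp_apply, mulVecLin_apply, dotProductBilin_apply_apply,
        dotProduct_mulVec, h3, zero_dotProduct, LinearMap.zero_apply]
  have hmult : M.charpoly.rootMultiplicity 1 = 2 := by
    rw [rootMultiplicity_eq_natTrailingDegree, ← charpoly_sub_scalar, map_one,
      ← charpoly_mulVecLin, ← LinearMap.finrank_maxGenEigenspace_zero_eq]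
    exact Module.End.finrank_maxGenEigenspace_zero_eq_two hφ₁ hker_eq h2 _ hψ h4
  have hne : M.charpoly ≠ 0 := M.charpoly_monic.ne_zero
  constructor
  · simpa only [map_one] using (le_rootMultiplicity_iff hne).mp hmult.ge
  · simpa only [map_one] using (rootMultiplicity_le_iff hne 1 2).mp hmult.le

theorem stmt_9 (N : ℕ) (hN : 0 < N) (M : Matrix (Fin N) (Fin N) ℂ)
    (hker : Module.finrank ℂ (LinearMap.ker ((M - 1).mulVecLin)) = 1)
    (φ₁ φ₂ : Fin N → ℂ) (hφ₁ : φ₁ ≠ 0)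
    (h1 : (M - 1) *ᵥ φ₁ = 0)
    (h2 : (M - 1) *ᵥ φ₂ = φ₁)
    (ψ₂ : Fin N → ℂ)
    (h3 : ψ₂ ᵥ* (M - 1) = 0)
    (h4 : ψ₂ ⬝ᵥ φ₂ ≠ 0) :
    (X - 1) ^ 2 ∣ M.charpoly ∧ ¬ (X - 1) ^ 3 ∣ M.charpoly :=
  stmt_9_general N M hker φ₁ φ₂ hφ₁ h1 h2 ψ₂ h3 h4
end
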